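/- Let σ > 0 and let h(x) := (2πσ²)⁻¹ exp(−‖x‖²/(2σ²)) be the Gaussian kernel on ℝ². Let N ≥ 1, 0 < R₁ < … < R_N, and s ∈ {−1,1}^N. Define A := { p ∈ L²(ℝ²) : for every i, ∫_{B(0,R_i)} (h⋆p)(x) dx = s_i · 2πR_i and (h⋆p)(x) = s_i/R_i for every x with ‖x‖ = R_i }. If A is nonempty, then A contains a unique element p_v of minimal L²-norm, and p_v is radial: p_v ∘ Q = p_v almost everywhere for every rotation Q of ℝ². -/

import Mathlib

open MeasureTheory Set

noncomputable section

abbrev Plane : Type := EuclideanSpace ℝ (Fin 2)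

abbrev L2 : Type := Lp ℝ 2 (volume : Measure Plane)

/-- The Gaussian kernel with standard deviation `σ` on the plane. -/
def gauss (σ : ℝ) (x : Plane) : ℝ :=
  (2 * Real.pi * σ ^ 2)⁻¹ * Real.exp (-‖x‖ ^ 2 / (2 * σ ^ 2))

/-- Convolution of the Gaussian kernel with `p ∈ L²(ℝ²)`. -/
def gconv (σ : ℝ) (p : L2) (x : Plane) : ℝ := ∫ y, gauss σ (x - y) * p y

/-- A rotation of the plane: a linear isometry with determinant one. -/
def IsRotation (R : Plane ≃ₗᵢ[ℝ] Plane) : Prop :=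
  LinearMap.det (R.toLinearEquiv : Plane →ₗ[ℝ] Plane) = 1

/-- The admissible set `A` of the vanishing derivatives pre-certificate problem. -/
def certSet (σ : ℝ) (N : ℕ) (R : Fin N → ℝ) (s : Fin N → ℝ) : Set L2 :=
  { p | ∀ i : Fin N,
      (∫ x in Metric.ball (0 : Plane) (R i), gconv σ p x) = s i * (2 * Real.pi * R i) ∧
      ∀ x : Plane, ‖x‖ = R i → gconv σ p x = s i / R i }

/-!
For fixed `x`, `p ↦ (h⋆p)(x)` is the inner product of `p` with the translate `h(x - ·) ∈ L²`,
so it is a continuous linear functional, and so is `p ↦ ∫_B (h⋆p)`, being bounded by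
`‖h‖₂ |B| ‖p‖`. Hence `A` is a closed convex subset of a Hilbert space and has a unique
element of minimal norm. Since `h` is radial, `(h⋆(p ∘ Q))(x) = (h⋆p)(Q x)` for a rotation `Q`;
as `Q` preserves balls, spheres and the `L²` norm, `p ∘ Q` is again a minimizer in `A`, and
uniqueness forces `p ∘ Q = p`.
-/

section MinimalNorm

variable {E : Type*} [NormedAddCommGroup E]

theorem Convex.eq_of_mem_of_forall_norm_le [NormedSpace ℝ E] [StrictConvexSpace ℝ E]
    {K : Set E} (hK : Convex ℝ K) {p q : E} (hp : p ∈ K ∧ ∀ r ∈ K, ‖p‖ ≤ ‖r‖)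
    (hq : q ∈ K ∧ ∀ r ∈ K, ‖q‖ ≤ ‖r‖) : p = q := by
  by_contra hne
  have hpq : ‖q‖ ≤ ‖p‖ := hq.2 p hp.1
  have hmid : (1 / 2 : ℝ) • p + (1 / 2 : ℝ) • q ∈ K :=
    hK hp.1 hq.1 (by norm_num) (by norm_num) (by norm_num)
  exact (hp.2 _ hmid).not_gt
    (norm_combo_lt_of_ne le_rfl hpq hne (by norm_num) (by norm_num) (by norm_num))

theorem Convex.existsUnique_mem_forall_norm_le [InnerProductSpace ℝ E] [CompleteSpace E]
    {K : Set E} (hK : Convex ℝ K) (hKc : IsClosed K) (hne : K.Nonempty) :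
    ∃! p : E, p ∈ K ∧ ∀ q ∈ K, ‖p‖ ≤ ‖q‖ := by
  obtain ⟨v, hvK, hv⟩ := exists_norm_eq_iInf_of_complete_convex hne hKc.isComplete hK 0
  have hbdd : BddBelow (range fun w : K => ‖(0 : E) - w‖) :=
    ⟨0, by rintro _ ⟨w, rfl⟩; positivity⟩
  have hvmin : ∀ q ∈ K, ‖v‖ ≤ ‖q‖ := fun q hq => by
    have := ciInf_le hbdd ⟨q, hq⟩
    rwa [← hv, zero_sub, zero_sub, norm_neg, norm_neg] at this
  exact ⟨v, ⟨hvK, hvmin⟩, fun w hw => hK.eq_of_mem_of_forall_norm_le hw ⟨hvK, hvmin⟩⟩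

end MinimalNorm

section Gaussian

theorem integrable_exp_neg_mul_sq_norm {V : Type*} [NormedAddCommGroup V]
    [InnerProductSpace ℝ V] [FiniteDimensional ℝ V] [MeasurableSpace V] [BorelSpace V]
    {b : ℝ} (hb : 0 < b) : Integrable (fun v : V => Real.exp (-b * ‖v‖ ^ 2)) := by
  refine (GaussianFourier.integrable_cexp_neg_mul_sq_norm_add (V := V) (b := (b : ℂ))
    (by simpa using hb) 0 0).norm.congr (.of_forall fun v => ?_)
  simp only [Complex.norm_exp, inner_zero_left, Complex.ofReal_zero, mul_zero, add_zero]
  norm_cast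

theorem continuous_gauss (σ : ℝ) : Continuous (gauss σ) := by
  unfold gauss; fun_prop

theorem gauss_map (σ : ℝ) (Q : Plane ≃ₗᵢ[ℝ] Plane) (x : Plane) : gauss σ (Q x) = gauss σ x := by
  rw [gauss, gauss, Q.norm_map]

theorem memLp_gauss {σ : ℝ} (hσ : 0 < σ) : MemLp (gauss σ) 2 (volume : Measure Plane) := by
  rw [memLp_two_iff_integrable_sq (continuous_gauss σ).aestronglyMeasurable]
  have hsq : (fun x : Plane => gauss σ x ^ 2) =
      fun x => ((2 * Real.pi * σ ^ 2)⁻¹) ^ 2 * Real.exp (-(σ ^ 2)⁻¹ * ‖x‖ ^ 2) := by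
    ext x
    rw [gauss, mul_pow, sq (Real.exp _), ← Real.exp_add]
    congr 2
    field_simp
    ring
  rw [hsq]
  exact (integrable_exp_neg_mul_sq_norm (by positivity)).const_mul _

def gaussTranslate {σ : ℝ} (hσ : 0 < σ) (x : Plane) : L2 :=
  ((memLp_gauss hσ).comp_measurePreserving (volume.measurePreserving_sub_left x)).toLp _

theorem coeFn_gaussTranslate {σ : ℝ} (hσ : 0 < σ) (x : Plane) :
    gaussTranslate hσ x =ᵐ[volume] fun y => gauss σ (x - y) :=
  MemLp.coeFn_toLp _

theorem norm_gaussTranslate {σ : ℝ} (hσ : 0 < σ) (x : Plane) :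
    ‖gaussTranslate hσ x‖ = (eLpNorm (gauss σ) 2 volume).toReal := by
  rw [gaussTranslate, Lp.norm_toLp]
  congr 1
  exact eLpNorm_comp_measurePreserving (memLp_gauss hσ).aestronglyMeasurable
    (volume.measurePreserving_sub_left x)

theorem gconv_eq_inner {σ : ℝ} (hσ : 0 < σ) (p : L2) (x : Plane) :
    gconv σ p x = inner ℝ (gaussTranslate hσ x) p := by
  rw [L2.inner_def, gconv]
  refine integral_congr_ae ?_
  filter_upwards [coeFn_gaussTranslate hσ x] with y hy
  simp [hy, mul_comm]

end Gaussian

section Functionals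

variable {σ : ℝ}

def gconvAt (hσ : 0 < σ) (x : Plane) : L2 →L[ℝ] ℝ := innerSL ℝ (gaussTranslate hσ x)

theorem gconvAt_apply (hσ : 0 < σ) (x : Plane) (p : L2) : gconvAt hσ x p = gconv σ p x :=
  (gconv_eq_inner hσ p x).symm

theorem abs_gconv_le (hσ : 0 < σ) (p : L2) (x : Plane) :
    |gconv σ p x| ≤ (eLpNorm (gauss σ) 2 volume).toReal * ‖p‖ := by
  rw [gconv_eq_inner hσ, ← norm_gaussTranslate hσ x]
  exact abs_real_inner_le_norm _ _

theorem stronglyMeasurable_gconv (p : L2) : StronglyMeasurable (gconv σ p) :=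
  StronglyMeasurable.integral_prod_right'
    (f := fun z : Plane × Plane => gauss σ (z.1 - z.2) * p z.2)
    ((((continuous_gauss σ).comp (continuous_fst.sub continuous_snd)).stronglyMeasurable).mul
      ((Lp.stronglyMeasurable p).comp_measurable measurable_snd))

theorem integrableOn_gconv (hσ : 0 < σ) {S : Set Plane} (hS : volume S < ⊤) (p : L2) :
    IntegrableOn (gconv σ p) S volume :=
  Measure.integrableOn_of_bounded hS.ne (stronglyMeasurable_gconv p).aestronglyMeasurable
    (.of_forall fun x => abs_gconv_le hσ p x)

def setIntegralGconv (hσ : 0 < σ) {S : Set Plane} (hS : volume S < ⊤) : L2 →L[ℝ] ℝ :=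
  LinearMap.mkContinuous
    { toFun := fun p => ∫ x in S, gconv σ p x
      map_add' := fun p q => by
        have hadd : ∀ x, gconv σ (p + q) x = gconv σ p x + gconv σ q x := fun x => by
          simp only [← gconvAt_apply hσ, map_add]
        simp only [hadd]
        exact integral_add (integrableOn_gconv hσ hS p) (integrableOn_gconv hσ hS q)
      map_smul' := fun c p => by
        have hsmul : ∀ x, gconv σ (c • p) x = c * gconv σ p x := fun x => by
          simp only [← gconvAt_apply hσ, map_smul, smul_eq_mul]
        simp only [hsmul, RingHom.id_apply, smul_eq_mul]
        exact integral_const_mul c _ }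
    ((eLpNorm (gauss σ) 2 volume).toReal * volume.real S)
    fun p => by
      refine (norm_setIntegral_le_of_norm_le_const hS fun x _ => abs_gconv_le hσ p x).trans_eq ?_
      ring

theorem setIntegralGconv_apply (hσ : 0 < σ) {S : Set Plane} (hS : volume S < ⊤) (p : L2) :
    setIntegralGconv hσ hS p = ∫ x in S, gconv σ p x := rfl

theorem certSet_eq_iInter (hσ : 0 < σ) (N : ℕ) (R : Fin N → ℝ) (s : Fin N → ℝ) :
    certSet σ N R s = ⋂ i,
      (setIntegralGconv hσ (measure_ball_lt_top (x := 0) (r := R i)) ⁻¹'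
          {s i * (2 * Real.pi * R i)} ∩
        ⋂ x ∈ Metric.sphere (0 : Plane) (R i), gconvAt hσ x ⁻¹' {s i / R i}) := by
  ext p
  simp [certSet, setIntegralGconv_apply, gconvAt_apply]

theorem isClosed_certSet (hσ : 0 < σ) (N : ℕ) (R : Fin N → ℝ) (s : Fin N → ℝ) :
    IsClosed (certSet σ N R s) := by
  rw [certSet_eq_iInter hσ]
  exact isClosed_iInter fun i =>
    (isClosed_singleton.preimage (ContinuousLinearMap.continuous _)).inter
      (isClosed_biInter fun x _ => isClosed_singleton.preimage (ContinuousLinearMap.continuous _))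

theorem convex_certSet (hσ : 0 < σ) (N : ℕ) (R : Fin N → ℝ) (s : Fin N → ℝ) :
    Convex ℝ (certSet σ N R s) := by
  rw [certSet_eq_iInter hσ]
  exact convex_iInter fun i => ((convex_singleton _).linear_preimage _).inter
    (convex_iInter₂ fun x _ => (convex_singleton _).linear_preimage _)

end Functionals

section Rotation

theorem gconv_compMeasurePreserving (σ : ℝ) (Q : Plane ≃ₗᵢ[ℝ] Plane) (p : L2) (x : Plane) :
    gconv σ (Lp.compMeasurePreserving Q Q.measurePreserving p) x = gconv σ p (Q x) := by
  calc gconv σ (Lp.compMeasurePreserving Q Q.measurePreserving p) x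
      = ∫ y, gauss σ (Q x - Q y) * p (Q y) := by
        refine integral_congr_ae ?_
        filter_upwards [Lp.coeFn_compMeasurePreserving p Q.measurePreserving] with y hy
        rw [hy, ← map_sub, gauss_map]
        rfl
    _ = gconv σ p (Q x) :=
        Q.measurePreserving.integral_comp Q.toHomeomorph.measurableEmbedding
          fun z => gauss σ (Q x - z) * p z

theorem compMeasurePreserving_mem_certSet {σ : ℝ} {N : ℕ} {R s : Fin N → ℝ}
    (Q : Plane ≃ₗᵢ[ℝ] Plane) {p : L2} (hp : p ∈ certSet σ N R s) :
    Lp.compMeasurePreserving Q Q.measurePreserving p ∈ certSet σ N R s := by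
  intro i
  obtain ⟨hball, hsphere⟩ := hp i
  simp only [gconv_compMeasurePreserving]
  refine ⟨?_, fun x hx => hsphere (Q x) (by rw [Q.norm_map, hx])⟩
  have himage : Q '' Metric.ball 0 (R i) = Metric.ball 0 (R i) := by simp
  rw [← Q.measurePreserving.setIntegral_image_emb Q.toHomeomorph.measurableEmbedding, himage,
    hball]

end Rotation

theorem stmt15_general (σ : ℝ) (hσ : 0 < σ) (N : ℕ)
    (R : Fin N → ℝ) (s : Fin N → ℝ)
    (hA : (certSet σ N R s).Nonempty) :
    (∃! p : L2, p ∈ certSet σ N R s ∧ ∀ q ∈ certSet σ N R s, ‖p‖ ≤ ‖q‖) ∧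
    (∀ p : L2, (p ∈ certSet σ N R s ∧ ∀ q ∈ certSet σ N R s, ‖p‖ ≤ ‖q‖) →
      ∀ Q : Plane ≃ₗᵢ[ℝ] Plane, IsRotation Q → (fun x => p (Q x)) =ᵐ[volume] ⇑p) := by
  have hconvex := convex_certSet hσ N R s
  refine ⟨hconvex.existsUnique_mem_forall_norm_le (isClosed_certSet hσ N R s) hA,
    fun p hp Q _ => ?_⟩
  set pQ := Lp.compMeasurePreserving Q Q.measurePreserving p
  have hpQ : pQ ∈ certSet σ N R s ∧ ∀ q ∈ certSet σ N R s, ‖pQ‖ ≤ ‖q‖ :=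
    ⟨compMeasurePreserving_mem_certSet Q hp.1, by
      simpa only [pQ, Lp.norm_compMeasurePreserving] using hp.2⟩
  have hfix : pQ = p := hconvex.eq_of_mem_of_forall_norm_le hpQ hp
  filter_upwards [Lp.coeFn_compMeasurePreserving p Q.measurePreserving] with x hx
  exact hx.symm.trans (congrArg (fun f : L2 => f x) hfix)

theorem stmt15 (σ : ℝ) (hσ : 0 < σ) (N : ℕ) (hN : 1 ≤ N)
    (R : Fin N → ℝ) (hR0 : ∀ i, 0 < R i) (hR : StrictMono R)
    (s : Fin N → ℝ) (hs : ∀ i, s i = 1 ∨ s i = -1)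
    (hA : (certSet σ N R s).Nonempty) :
    (∃! p : L2, p ∈ certSet σ N R s ∧ ∀ q ∈ certSet σ N R s, ‖p‖ ≤ ‖q‖) ∧
    (∀ p : L2, (p ∈ certSet σ N R s ∧ ∀ q ∈ certSet σ N R s, ‖p‖ ≤ ‖q‖) →
      ∀ Q : Plane ≃ₗᵢ[ℝ] Plane, IsRotation Q → (fun x => p (Q x)) =ᵐ[volume] ⇑p) :=
  stmt15_general σ hσ N R s hA
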